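/- Let X and Y be Hilbert spaces, T : X → Y a bounded linear operator with a least-squares projection approximation {(X_n, T_n)}, and let Q_n := T† P_{T(X_n)} T be the bounded idempotent with Q_n x the unique u ∈ N(T)^⊥ such that Tu = P_{T(X_n)} T x. Then for every n: 1 ≤ ‖I − Q_n‖ < +∞, and ‖P_{T*T(X_n)} − P_{P_{N(T)^⊥}(X_n)}‖ = √(1 − ‖I − Q_n‖⁻²) ∈ [0, 1). In particular, the gap between T†T(X_n) = P_{N(T)^⊥}(X_n) and T*T(X_n) is strictly less than 1 for every n. -/

import Mathlib

open Filter Topology Metric Submodule ContinuousLinearMap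

/-- Orthogonal projection onto a subspace `K` (as an operator `H →L[ℝ] H`),
defined whenever `K` admits orthogonal projections (e.g. `K` closed). -/
noncomputable def orthProj {H : Type*} [NormedAddCommGroup H] [InnerProductSpace ℝ H]
    (K : Submodule ℝ H) : H →L[ℝ] H :=
  open scoped Classical in
  if h : HasOrthogonalProjection K then
    haveI := h
    K.subtypeL.comp (orthogonalProjection K)
  else 0

/-- `δ(M,N) = sup {dist(x,N) : x ∈ M, ‖x‖ = 1}` (0 if `M = {0}`, as `sSup ∅ = 0` in `ℝ`). -/
noncomputable def deltaSub {H : Type*} [NormedAddCommGroup H] [InnerProductSpace ℝ H]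
    (M N : Submodule ℝ H) : ℝ :=
  sSup {d : ℝ | ∃ x ∈ M, ‖x‖ = 1 ∧ d = Metric.infDist x (N : Set H)}

/-- The gap between two subspaces. -/
noncomputable def gapSub {H : Type*} [NormedAddCommGroup H] [InnerProductSpace ℝ H]
    (M N : Submodule ℝ H) : ℝ :=
  max (deltaSub M N) (deltaSub N M)

variable {X Y : Type*} [NormedAddCommGroup X] [InnerProductSpace ℝ X] [CompleteSpace X]
  [NormedAddCommGroup Y] [InnerProductSpace ℝ Y] [CompleteSpace Y]

/-!
Write `E = 1 - Q` for the idempotent `Q` with range `M` and kernel `Nᗮ`. If an operator `A` fixes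
`m` and kills `k`, then `A` maps the component of `m` orthogonal to `k` back to `m`, so
`⟪m, k⟫² ≤ (1 - ‖A‖⁻²) ‖m‖² ‖k‖²`. Applied to `E` and to `E*`, this bounds both pieces
`P_M P_{Nᗮ}` and `P_{Mᗮ} P_N` of `P_M - P_N`, whence `‖P_M - P_N‖² ≤ 1 - ‖E‖⁻²`. Conversely,
`⟪E x, Q x⟫ = ⟪E x, (P_M - P_N) Q x⟫`, which gives `‖E‖² (1 - ‖P_M - P_N‖²) ≤ 1`.
For `Q = Qₙ` one has `M = P_{N(T)ᗮ}(Xₙ)` and `N = T*T(Xₙ)`; since `X` is infinite-dimensional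
and `M` is not, `Qₙ ≠ 1`, so `‖E‖ ≥ 1`, and the gap is at most `‖P_M - P_N‖ < 1`.
-/

open scoped RealInnerProductSpace

theorem orthProj_eq_starProjection {H : Type*} [NormedAddCommGroup H] [InnerProductSpace ℝ H]
    (K : Submodule ℝ H) [K.HasOrthogonalProjection] : orthProj K = K.starProjection := by
  rw [orthProj, dif_pos ‹_›]
  rfl

theorem IsIdempotentElem.one_le_norm {R : Type*} [NormedRing R] {p : R}
    (hp : IsIdempotentElem p) (h0 : p ≠ 0) : 1 ≤ ‖p‖ := by
  refine le_of_mul_le_mul_right ?_ (norm_pos_iff.mpr h0)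
  calc 1 * ‖p‖ = ‖p * p‖ := by rw [one_mul, hp.eq]
    _ ≤ ‖p‖ * ‖p‖ := norm_mul_le p p

theorem ContinuousLinearMap.sq_opNorm_le_of_forall {E F : Type*} [SeminormedAddCommGroup E]
    [NormedSpace ℝ E] [SeminormedAddCommGroup F] [NormedSpace ℝ F] (f : E →L[ℝ] F) {C : ℝ}
    (hC : 0 ≤ C) (h : ∀ x, ‖f x‖ ^ 2 ≤ C * ‖x‖ ^ 2) : ‖f‖ ^ 2 ≤ C := by
  have hf : ‖f‖ ≤ √C := f.opNorm_le_bound (Real.sqrt_nonneg C) fun x => by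
    rw [← Real.sqrt_sq (norm_nonneg x), ← Real.sqrt_mul hC]
    exact Real.le_sqrt_of_sq_le (h x)
  calc ‖f‖ ^ 2 ≤ √C ^ 2 := pow_le_pow_left₀ (norm_nonneg f) hf 2
    _ = C := Real.sq_sqrt hC

section InnerProductSpace

variable {H : Type*} [NormedAddCommGroup H] [InnerProductSpace ℝ H]

theorem one_sub_sq_mul_norm_sq_le_norm_add_sq {u v : H} {c : ℝ}
    (h : |⟪u, v⟫| ≤ c * ‖u‖ * ‖v‖) : (1 - c ^ 2) * ‖u‖ ^ 2 ≤ ‖u + v‖ ^ 2 := by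
  rw [norm_add_sq_real]
  nlinarith [neg_abs_le ⟪u, v⟫, sq_nonneg (c * ‖u‖ - ‖v‖)]

theorem Submodule.inner_starProjection_eq_norm_sq (K : Submodule ℝ H) [K.HasOrthogonalProjection]
    (v : H) : ⟪v, K.starProjection v⟫ = ‖K.starProjection v‖ ^ 2 := by
  rw [← real_inner_self_eq_norm_sq, inner_starProjection_left_eq_right,
    starProjection_eq_self_iff.mpr (K.starProjection_apply_mem v)]

theorem ContinuousLinearMap.inner_sq_le_of_apply_eq_self_of_apply_eq_zero (A : H →L[ℝ] H)
    {m k : H} (hm : A m = m) (hk : A k = 0) :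
    ⟪m, k⟫ ^ 2 ≤ (1 - (‖A‖ ^ 2)⁻¹) * (‖m‖ ^ 2 * ‖k‖ ^ 2) := by
  rcases eq_or_ne m 0 with rfl | hm0
  · simp
  rcases eq_or_ne k 0 with rfl | hk0
  · simp
  have hA : 0 < ‖A‖ ^ 2 := by
    refine pow_pos (norm_pos_iff.mpr fun h => hm0 ?_) 2
    rw [← hm, h, zero_apply]
  -- `y / ‖k‖²` is the component of `m` orthogonal to `k`, and `A` maps it to `m`
  set y := ‖k‖ ^ 2 • m - ⟪m, k⟫ • k
  have hAy : ‖A y‖ ^ 2 = ‖k‖ ^ 2 * (‖k‖ ^ 2 * ‖m‖ ^ 2) := by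
    simp only [y, map_sub, map_smul, hm, hk, smul_zero, sub_zero, norm_smul, norm_pow, norm_norm]
    ring
  have hy : ‖y‖ ^ 2 = ‖k‖ ^ 2 * (‖m‖ ^ 2 * ‖k‖ ^ 2 - ⟪m, k⟫ ^ 2) := by
    rw [norm_sub_sq_real, real_inner_smul_left, real_inner_smul_right,
      norm_smul, norm_smul, Real.norm_eq_abs, Real.norm_eq_abs, abs_of_nonneg (by positivity),
      mul_pow, mul_pow, sq_abs]
    ring
  have hbound : ‖k‖ ^ 2 * ‖m‖ ^ 2 ≤ ‖A‖ ^ 2 * (‖m‖ ^ 2 * ‖k‖ ^ 2 - ⟪m, k⟫ ^ 2) := by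
    refine le_of_mul_le_mul_left ?_ (pow_pos (norm_pos_iff.mpr hk0) 2)
    calc ‖k‖ ^ 2 * (‖k‖ ^ 2 * ‖m‖ ^ 2) = ‖A y‖ ^ 2 := hAy.symm
      _ ≤ (‖A‖ * ‖y‖) ^ 2 := pow_le_pow_left₀ (norm_nonneg _) (A.le_opNorm y) 2
      _ = ‖k‖ ^ 2 * (‖A‖ ^ 2 * (‖m‖ ^ 2 * ‖k‖ ^ 2 - ⟪m, k⟫ ^ 2)) := by rw [mul_pow, hy]; ring
  calc ⟪m, k⟫ ^ 2 = (‖A‖ ^ 2)⁻¹ * (‖A‖ ^ 2 * ⟪m, k⟫ ^ 2) := by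
        rw [inv_mul_cancel_left₀ hA.ne']
    _ ≤ (‖A‖ ^ 2)⁻¹ * ((‖A‖ ^ 2 - 1) * (‖m‖ ^ 2 * ‖k‖ ^ 2)) :=
        mul_le_mul_of_nonneg_left (by linarith) (inv_nonneg.mpr hA.le)
    _ = (1 - (‖A‖ ^ 2)⁻¹) * (‖m‖ ^ 2 * ‖k‖ ^ 2) := by
        rw [← mul_assoc, mul_sub, inv_mul_cancel₀ hA.ne', mul_one]

end InnerProductSpace

section ObliqueProjection

variable {H : Type*} [NormedAddCommGroup H] [InnerProductSpace ℝ H]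
  {Q : H →L[ℝ] H} {M N : Submodule ℝ H} [M.HasOrthogonalProjection]

theorem norm_starProjection_apply_sq_le_of_mem_ker (hQ : IsIdempotentElem Q)
    (hrange : LinearMap.range (Q : H →ₗ[ℝ] H) = M) (hE : 1 ≤ ‖1 - Q‖) {k : H}
    (hk : k ∈ LinearMap.ker (Q : H →ₗ[ℝ] H)) :
    ‖M.starProjection k‖ ^ 2 ≤ (1 - (‖1 - Q‖ ^ 2)⁻¹) * ‖k‖ ^ 2 := by
  have hs : 0 ≤ 1 - (‖1 - Q‖ ^ 2)⁻¹ := sub_nonneg.mpr (inv_le_one_of_one_le₀ (one_le_pow₀ hE))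
  have hEk : (1 - Q) k = k := by
    have hQk : Q k = 0 := hk
    simp [hQk]
  have hEPk : (1 - Q) (M.starProjection k) = 0 := by
    obtain ⟨y, hy⟩ : M.starProjection k ∈ LinearMap.range (Q : H →ₗ[ℝ] H) :=
      hrange ▸ M.starProjection_apply_mem k
    have hQQ : Q (Q y) = Q y := DFunLike.congr_fun hQ.eq y
    rw [← hy]
    simp [hQQ]
  have h := (1 - Q).inner_sq_le_of_apply_eq_self_of_apply_eq_zero hEk hEPk
  rw [M.inner_starProjection_eq_norm_sq] at h
  nlinarith [mul_nonneg hs (sq_nonneg ‖k‖)]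

theorem norm_starProjection_orthogonal_apply_sq_le_of_mem [CompleteSpace H]
    (hQ : IsIdempotentElem Q) (hrange : LinearMap.range (Q : H →ₗ[ℝ] H) = M)
    (hker : LinearMap.ker (Q : H →ₗ[ℝ] H) = Nᗮ) (hE : 1 ≤ ‖1 - Q‖) {n : H} (hn : n ∈ N) :
    ‖Mᗮ.starProjection n‖ ^ 2 ≤ (1 - (‖1 - Q‖ ^ 2)⁻¹) * ‖n‖ ^ 2 := by
  have hs : 0 ≤ 1 - (‖1 - Q‖ ^ 2)⁻¹ := sub_nonneg.mpr (inv_le_one_of_one_le₀ (one_le_pow₀ hE))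
  have hEw : adjoint (1 - Q) (Mᗮ.starProjection n) = Mᗮ.starProjection n :=
    ext_inner_right ℝ fun y => by
      have hQy : Q y ∈ M := hrange ▸ LinearMap.mem_range_self (Q : H →ₗ[ℝ] H) y
      rw [adjoint_inner_left, sub_apply, one_apply_eq_self, inner_sub_right,
        inner_left_of_mem_orthogonal hQy (Mᗮ.starProjection_apply_mem n), sub_zero]
  have hEn : adjoint (1 - Q) n = 0 := ext_inner_right ℝ fun y => by
    have hQQ : Q (Q y) = Q y := DFunLike.congr_fun hQ.eq y
    have hEy : (1 - Q) y ∈ Nᗮ := hker ▸ LinearMap.mem_ker.mpr (by simp [hQQ])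
    rw [adjoint_inner_left, inner_zero_left, inner_right_of_mem_orthogonal hn hEy]
  have h := (adjoint (1 - Q)).inner_sq_le_of_apply_eq_self_of_apply_eq_zero hEw hEn
  rw [real_inner_comm, Mᗮ.inner_starProjection_eq_norm_sq, LinearIsometryEquiv.norm_map] at h
  nlinarith [mul_nonneg hs (sq_nonneg ‖n‖)]

theorem norm_starProjection_sub_sq_le [CompleteSpace H] [N.HasOrthogonalProjection]
    (hQ : IsIdempotentElem Q) (hrange : LinearMap.range (Q : H →ₗ[ℝ] H) = M)
    (hker : LinearMap.ker (Q : H →ₗ[ℝ] H) = Nᗮ) (hE : 1 ≤ ‖1 - Q‖) :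
    ‖M.starProjection - N.starProjection‖ ^ 2 ≤ 1 - (‖1 - Q‖ ^ 2)⁻¹ := by
  refine sq_opNorm_le_of_forall _ (sub_nonneg.mpr (inv_le_one_of_one_le₀ (one_le_pow₀ hE)))
    fun x => ?_
  have hx : (M.starProjection - N.starProjection) x
      = M.starProjection (Nᗮ.starProjection x) - Mᗮ.starProjection (N.starProjection x) := by
    rw [starProjection_orthogonal_val, starProjection_orthogonal_val, map_sub, sub_apply]
    abel
  rw [hx, norm_sub_sq_real, inner_right_of_mem_orthogonal (M.starProjection_apply_mem _)
    (Mᗮ.starProjection_apply_mem _), N.norm_sq_eq_add_norm_sq_starProjection x]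
  have hk : Nᗮ.starProjection x ∈ LinearMap.ker (Q : H →ₗ[ℝ] H) := by
    rw [hker]
    exact Nᗮ.starProjection_apply_mem x
  linarith [norm_starProjection_apply_sq_le_of_mem_ker hQ hrange hE hk,
    norm_starProjection_orthogonal_apply_sq_le_of_mem hQ hrange hker hE
      (N.starProjection_apply_mem x)]

theorem one_sub_norm_starProjection_sub_sq_mul_le [N.HasOrthogonalProjection]
    (hQ : IsIdempotentElem Q) (hrange : LinearMap.range (Q : H →ₗ[ℝ] H) = M)
    (hker : LinearMap.ker (Q : H →ₗ[ℝ] H) = Nᗮ) (x : H) :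
    (1 - ‖M.starProjection - N.starProjection‖ ^ 2) * ‖(1 - Q) x‖ ^ 2 ≤ ‖x‖ ^ 2 := by
  set D := M.starProjection - N.starProjection
  have hQx : Q x ∈ M := hrange ▸ LinearMap.mem_range_self (Q : H →ₗ[ℝ] H) x
  have hQQ : Q (Q x) = Q x := DFunLike.congr_fun hQ.eq x
  have hEx : (1 - Q) x ∈ Nᗮ :=
    hker ▸ LinearMap.mem_ker.mpr (show Q (x - Q x) = 0 by rw [map_sub, hQQ, sub_self])
  -- `D` agrees with the identity on `Q x` up to a vector orthogonal to `(1 - Q) x`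
  have hinner : ⟪(1 - Q) x, Q x⟫ = ⟪(1 - Q) x, D (Q x)⟫ := by
    rw [show D (Q x) = Q x - N.starProjection (Q x) by
        simp only [D, sub_apply, starProjection_eq_self_iff.mpr hQx],
      inner_sub_right, ← inner_starProjection_left_eq_right,
      (N.starProjection_apply_eq_zero_iff).mpr hEx, inner_zero_left, sub_zero]
  have hcos : |⟪(1 - Q) x, Q x⟫| ≤ ‖D‖ * ‖(1 - Q) x‖ * ‖Q x‖ := by
    rw [hinner]
    calc |⟪(1 - Q) x, D (Q x)⟫| ≤ ‖(1 - Q) x‖ * ‖D (Q x)‖ := abs_real_inner_le_norm _ _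
      _ ≤ ‖(1 - Q) x‖ * (‖D‖ * ‖Q x‖) := by gcongr; exact D.le_opNorm _
      _ = ‖D‖ * ‖(1 - Q) x‖ * ‖Q x‖ := by ring
  simpa using one_sub_sq_mul_norm_sq_le_norm_add_sq hcos

theorem norm_starProjection_sub_eq_sqrt [CompleteSpace H] [N.HasOrthogonalProjection]
    (hQ : IsIdempotentElem Q) (hrange : LinearMap.range (Q : H →ₗ[ℝ] H) = M)
    (hker : LinearMap.ker (Q : H →ₗ[ℝ] H) = Nᗮ) (hQ1 : Q ≠ 1) :
    ‖M.starProjection - N.starProjection‖ = √(1 - (‖1 - Q‖ ^ 2)⁻¹) := by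
  have hE : 1 ≤ ‖1 - Q‖ := hQ.one_sub.one_le_norm (sub_ne_zero.mpr hQ1.symm)
  have hEpos : 0 < ‖1 - Q‖ ^ 2 := by positivity
  have hupper := norm_starProjection_sub_sq_le hQ hrange hker hE
  have hD : 0 < 1 - ‖M.starProjection - N.starProjection‖ ^ 2 := by
    linarith [inv_pos.mpr hEpos]
  have hlower : 1 - (‖1 - Q‖ ^ 2)⁻¹ ≤ ‖M.starProjection - N.starProjection‖ ^ 2 := by
    have hEsq : ‖1 - Q‖ ^ 2 ≤ (1 - ‖M.starProjection - N.starProjection‖ ^ 2)⁻¹ :=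
      sq_opNorm_le_of_forall _ (inv_nonneg.mpr hD.le) fun x =>
        (le_inv_mul_iff₀ hD).mpr (one_sub_norm_starProjection_sub_sq_mul_le hQ hrange hker x)
    linarith [(le_inv_comm₀ hEpos hD).mp hEsq]
  rw [← le_antisymm hupper hlower, Real.sqrt_sq (norm_nonneg _)]

end ObliqueProjection

section Gap

variable {H : Type*} [NormedAddCommGroup H] [InnerProductSpace ℝ H] (M N : Submodule ℝ H)
  [M.HasOrthogonalProjection] [N.HasOrthogonalProjection]

theorem deltaSub_le_norm_starProjection_sub :
    deltaSub M N ≤ ‖M.starProjection - N.starProjection‖ := by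
  refine Real.sSup_le ?_ (norm_nonneg _)
  rintro _ ⟨x, hx, hx1, rfl⟩
  calc infDist x N ≤ dist x (N.starProjection x) := infDist_le_dist_of_mem (by simp)
    _ = ‖(M.starProjection - N.starProjection) x‖ := by
      rw [dist_eq_norm, sub_apply, starProjection_eq_self_iff.mpr hx]
    _ ≤ ‖M.starProjection - N.starProjection‖ := by
      simpa [hx1] using (M.starProjection - N.starProjection).le_opNorm x

theorem gapSub_le_norm_starProjection_sub :
    gapSub M N ≤ ‖M.starProjection - N.starProjection‖ :=
  max_le (deltaSub_le_norm_starProjection_sub M N) <| by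
    rw [norm_sub_rev]
    exact deltaSub_le_norm_starProjection_sub N M

end Gap

section Pseudoinverse

variable {E F : Type*} [NormedAddCommGroup E] [InnerProductSpace ℝ E] [NormedAddCommGroup F]
  [InnerProductSpace ℝ F] (T : E →L[ℝ] F)

theorem ContinuousLinearMap.apply_starProjection_orthogonal_ker [CompleteSpace E] (x : E) :
    T ((LinearMap.ker (T : E →ₗ[ℝ] F))ᗮ.starProjection x) = T x := by
  have hker : T ((LinearMap.ker (T : E →ₗ[ℝ] F)).starProjection x) = 0 :=
    LinearMap.mem_ker.mp ((LinearMap.ker (T : E →ₗ[ℝ] F)).starProjection_apply_mem x)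
  rw [starProjection_orthogonal_val, map_sub, hker, sub_zero]

theorem ContinuousLinearMap.eq_of_mem_orthogonal_ker {u v : E} (hu : u ∈ (LinearMap.ker (T : E →ₗ[ℝ] F))ᗮ)
    (hv : v ∈ (LinearMap.ker (T : E →ₗ[ℝ] F))ᗮ) (h : T u = T v) : u = v := by
  have huv : u - v ∈ LinearMap.ker (T : E →ₗ[ℝ] F) ⊓ (LinearMap.ker (T : E →ₗ[ℝ] F))ᗮ :=
    ⟨LinearMap.mem_ker.mpr (by simp [h]), sub_mem hu hv⟩
  rwa [inf_orthogonal_eq_bot, Submodule.mem_bot ℝ, sub_eq_zero] at huv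

theorem ContinuousLinearMap.apply_mem_orthogonal_map_iff [CompleteSpace E] [CompleteSpace F]
    (V : Submodule ℝ E) (x : E) :
    T x ∈ (V.map (T : E →ₗ[ℝ] F))ᗮ ↔ x ∈ (V.map ((adjoint T).comp T : E →ₗ[ℝ] E))ᗮ := by
  simp [mem_orthogonal, adjoint_inner_left]

/-- `Q = T† P_{T(V)} T`, described without the pseudoinverse. -/
def IsPinvProjection (V : Submodule ℝ E) [(V.map (T : E →ₗ[ℝ] F)).HasOrthogonalProjection]
    (Q : E →L[ℝ] E) : Prop :=
  ∀ x, Q x ∈ (LinearMap.ker (T : E →ₗ[ℝ] F))ᗮ ∧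
    T (Q x) = (V.map (T : E →ₗ[ℝ] F)).starProjection (T x)

namespace IsPinvProjection

variable [CompleteSpace E] {T} {V : Submodule ℝ E} [(V.map (T : E →ₗ[ℝ] F)).HasOrthogonalProjection]
  {Q : E →L[ℝ] E}

theorem apply_mem (hQ : IsPinvProjection T V Q) (x : E) :
    Q x ∈ V.map ((LinearMap.ker (T : E →ₗ[ℝ] F))ᗮ.starProjection : E →ₗ[ℝ] E) := by
  obtain ⟨v, hv, hTv⟩ := mem_map.mp ((V.map (T : E →ₗ[ℝ] F)).starProjection_apply_mem (T x))
  refine mem_map.mpr ⟨v, hv, eq_of_mem_orthogonal_ker T (starProjection_apply_mem _ v) (hQ x).1 ?_⟩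
  rw [ContinuousLinearMap.coe_coe, apply_starProjection_orthogonal_ker, (hQ x).2]
  exact hTv

theorem apply_eq_self (hQ : IsPinvProjection T V Q) {m : E}
    (hm : m ∈ V.map ((LinearMap.ker (T : E →ₗ[ℝ] F))ᗮ.starProjection : E →ₗ[ℝ] E)) : Q m = m := by
  obtain ⟨v, hv, rfl⟩ := mem_map.mp hm
  refine eq_of_mem_orthogonal_ker T (hQ _).1 (starProjection_apply_mem _ v) ?_
  rw [(hQ _).2, ContinuousLinearMap.coe_coe, apply_starProjection_orthogonal_ker]
  exact starProjection_eq_self_iff.mpr (mem_map_of_mem hv)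

theorem isIdempotentElem (hQ : IsPinvProjection T V Q) : IsIdempotentElem Q :=
  ContinuousLinearMap.ext fun x => hQ.apply_eq_self (hQ.apply_mem x)

theorem range_eq (hQ : IsPinvProjection T V Q) :
    LinearMap.range (Q : E →ₗ[ℝ] E) =
      V.map ((LinearMap.ker (T : E →ₗ[ℝ] F))ᗮ.starProjection : E →ₗ[ℝ] E) :=
  le_antisymm (LinearMap.range_le_iff_comap.mpr (eq_top_iff.mpr fun x _ => hQ.apply_mem x))
    fun m hm => ⟨m, hQ.apply_eq_self hm⟩

theorem ker_eq [CompleteSpace F] (hQ : IsPinvProjection T V Q) :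
    LinearMap.ker (Q : E →ₗ[ℝ] E) = (V.map ((adjoint T).comp T : E →ₗ[ℝ] E))ᗮ := by
  ext x
  rw [LinearMap.mem_ker, ContinuousLinearMap.coe_coe, ← apply_mem_orthogonal_map_iff,
    ← starProjection_apply_eq_zero_iff, ← (hQ x).2]
  constructor
  · intro h
    rw [h, map_zero]
  · intro h
    exact eq_of_mem_orthogonal_ker T (hQ x).1 (zero_mem _) (h.trans (map_zero T).symm)

end IsPinvProjection

end Pseudoinverse

theorem stmt16_general
    (T : X →L[ℝ] Y) (Xn : ℕ → Submodule ℝ X)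
    (hfin : ∀ n, FiniteDimensional ℝ (Xn n))
    (hinf : ¬ FiniteDimensional ℝ X)
    (Qn : ℕ → X →L[ℝ] X)
    (hQn : ∀ n (x : X), Qn n x ∈ (LinearMap.ker (T : X →ₗ[ℝ] Y))ᗮ ∧
      T (Qn n x) = orthProj ((Xn n).map (T : X →ₗ[ℝ] Y)) (T x)) :
    ∀ n,
      (1 ≤ ‖(1 : X →L[ℝ] X) - Qn n‖) ∧
      (‖orthProj ((Xn n).map ((ContinuousLinearMap.adjoint T).comp T : X →ₗ[ℝ] X)) -
          orthProj ((Xn n).map (orthProj ((LinearMap.ker (T : X →ₗ[ℝ] Y))ᗮ) : X →ₗ[ℝ] X))‖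
        = Real.sqrt (1 - (‖(1 : X →L[ℝ] X) - Qn n‖ ^ 2)⁻¹)) ∧
      (Real.sqrt (1 - (‖(1 : X →L[ℝ] X) - Qn n‖ ^ 2)⁻¹) < 1) ∧
      (gapSub ((Xn n).map (orthProj ((LinearMap.ker (T : X →ₗ[ℝ] Y))ᗮ) : X →ₗ[ℝ] X))
        ((Xn n).map ((ContinuousLinearMap.adjoint T).comp T : X →ₗ[ℝ] X)) < 1) := by
  intro n
  have := hfin n
  have hQ : IsPinvProjection T (Xn n) (Qn n) := fun x => by
    rw [← orthProj_eq_starProjection]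
    exact hQn n x
  have hQ1 : Qn n ≠ 1 := by
    intro hQ1
    have htop := hQ.range_eq
    rw [hQ1, toLinearMap_one, Module.End.one_eq_id, LinearMap.range_id] at htop
    exact hinf (Module.Finite.equiv (LinearEquiv.ofTop _ htop.symm))
  have hE : 1 ≤ ‖1 - Qn n‖ := hQ.isIdempotentElem.one_sub.one_le_norm (sub_ne_zero.mpr hQ1.symm)
  have hnorm := norm_starProjection_sub_eq_sqrt hQ.isIdempotentElem hQ.range_eq hQ.ker_eq hQ1
  have hlt : √(1 - (‖1 - Qn n‖ ^ 2)⁻¹) < 1 := by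
    have : 0 < (‖1 - Qn n‖ ^ 2)⁻¹ := by positivity
    rw [Real.sqrt_lt' one_pos]
    linarith
  simp only [orthProj_eq_starProjection]
  refine ⟨hE, by rw [norm_sub_rev, hnorm], hlt, ?_⟩
  exact (gapSub_le_norm_starProjection_sub _ _).trans_lt (hnorm ▸ hlt)

/-- Norm identity relating the oblique projections `Qₙ` and the gap between
`T†T(Xₙ) = P_{N(T)ᗮ}(Xₙ)` and `T*T(Xₙ)`; in particular the gap is `< 1`. -/
theorem stmt16
    (T : X →L[ℝ] Y) (Xn : ℕ → Submodule ℝ X)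
    (hfin : ∀ n, FiniteDimensional ℝ (Xn n))
    (hinf : ¬ FiniteDimensional ℝ X)
    (hproj : ∀ x : X, Tendsto (fun n => orthProj (Xn n) x) atTop (𝓝 x))
    (Tn : ℕ → X →L[ℝ] Y) (hTn : ∀ n, Tn n = T.comp (orthProj (Xn n)))
    (Qn : ℕ → X →L[ℝ] X)
    (hQn : ∀ n (x : X), Qn n x ∈ (LinearMap.ker (T : X →ₗ[ℝ] Y))ᗮ ∧
      T (Qn n x) = orthProj ((Xn n).map (T : X →ₗ[ℝ] Y)) (T x)) :
    ∀ n,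
      (1 ≤ ‖(1 : X →L[ℝ] X) - Qn n‖) ∧
      (‖orthProj ((Xn n).map ((ContinuousLinearMap.adjoint T).comp T : X →ₗ[ℝ] X)) -
          orthProj ((Xn n).map (orthProj ((LinearMap.ker (T : X →ₗ[ℝ] Y))ᗮ) : X →ₗ[ℝ] X))‖
        = Real.sqrt (1 - (‖(1 : X →L[ℝ] X) - Qn n‖ ^ 2)⁻¹)) ∧
      (Real.sqrt (1 - (‖(1 : X →L[ℝ] X) - Qn n‖ ^ 2)⁻¹) < 1) ∧
      (gapSub ((Xn n).map (orthProj ((LinearMap.ker (T : X →ₗ[ℝ] Y))ᗮ) : X →ₗ[ℝ] X))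
        ((Xn n).map ((ContinuousLinearMap.adjoint T).comp T : X →ₗ[ℝ] X)) < 1) :=
  stmt16_general T Xn hfin hinf Qn hQn
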